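/- arXiv:1503.07199 — 5 statements merged into one kernel-verified Lean document; each statement's English description precedes it below -/
import Mathlib

section
/- Every interval graph is asteroidal-triple free: if a finite simple graph G admits an interval representation, then G contains no asteroidal triple. -/
/-- A simple graph `G` is an interval graph if each vertex can be assigned a nonempty
closed real interval `[a v, b v]` such that two distinct vertices are adjacent
iff their intervals intersect. -/
def IsIntervalGraph {V : Type*} (G : SimpleGraph V) : Prop :=
  ∃ a b : V → ℝ, (∀ v, a v ≤ b v) ∧
    ∀ u v : V, u ≠ v →
      (G.Adj u v ↔ (Set.Icc (a u) (b u) ∩ Set.Icc (a v) (b v)).Nonempty)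

/-- A walk `p` avoids the closed neighborhood of `c` if no vertex on `p` equals `c`
or is adjacent to `c`. -/
def AvoidsClosedNbhd {V : Type*} (G : SimpleGraph V) (c : V) {x y : V}
    (p : G.Walk x y) : Prop :=
  ∀ z ∈ p.support, z ≠ c ∧ ¬ G.Adj c z

/-- Three pairwise distinct, pairwise non-adjacent vertices form an asteroidal triple
if every two of them are joined by a walk avoiding the closed neighborhood of the third. -/
def IsAsteroidalTriple {V : Type*} (G : SimpleGraph V) (a b c : V) : Prop :=
  a ≠ b ∧ b ≠ c ∧ a ≠ c ∧
  ¬ G.Adj a b ∧ ¬ G.Adj b c ∧ ¬ G.Adj a c ∧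
  (∃ p : G.Walk a b, AvoidsClosedNbhd G c p) ∧
  (∃ p : G.Walk b c, AvoidsClosedNbhd G a p) ∧
  (∃ p : G.Walk a c, AvoidsClosedNbhd G b p)

private lemma walk_side {V : Type*} {G : SimpleGraph V} {f g : V → ℝ}
    (hfg : ∀ v, f v ≤ g v)
    (hadj : ∀ u v : V, u ≠ v →
      (G.Adj u v ↔ (Set.Icc (f u) (g u) ∩ Set.Icc (f v) (g v)).Nonempty))
    {c : V} :
    ∀ {x z : V} (p : G.Walk x z), AvoidsClosedNbhd G c p →
      g x < f c → g c < f z → False := by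
  intro x z p
  induction p with
  | nil =>
    intro _ hx hz
    exact absurd ((hx.trans_le (hfg c)).trans hz) (not_lt.2 (hfg _))
  | @cons u v w h q ih =>
    intro hp hx hz
    obtain ⟨t, ⟨ht1, ht2⟩, ht3, ht4⟩ := (hadj u v h.ne).1 h
    have hv : v ∈ (SimpleGraph.Walk.cons h q).support := by
      simp [SimpleGraph.Walk.support_cons]
    obtain ⟨hvc, hvadj⟩ := hp v hv
    have hdisj : ¬ (Set.Icc (f c) (g c) ∩ Set.Icc (f v) (g v)).Nonempty := by
      intro hne
      exact hvadj ((hadj c v (Ne.symm hvc)).2 hne)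
    have hvside : g v < f c := by
      by_contra hle
      push_neg at hle
      rcases le_or_gt (f v) (g c) with hfv | hfv
      · exact hdisj ⟨max (f c) (f v), ⟨le_max_left _ _, max_le (hfg c) hfv⟩,
          ⟨le_max_right _ _, max_le hle (hfg v)⟩⟩
      · have := hfg c
        linarith
    have hq : AvoidsClosedNbhd G c q := by
      intro w hw
      exact hp w (by simp [SimpleGraph.Walk.support_cons, hw])
    exact ih hq hvside hz

/-- Every interval graph is asteroidal-triple free. -/
theorem interval_graph_at_free {V : Type*} [Fintype V] (G : SimpleGraph V)
    (hG : IsIntervalGraph G) :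
    ¬ ∃ a b c : V, IsAsteroidalTriple G a b c := by
  rintro ⟨x, y, z, hxy, hyz, hxz, nxy, nyz, nxz, ⟨pxy, hpxy⟩, ⟨pyz, hpyz⟩, ⟨pxz, hpxz⟩⟩
  obtain ⟨f, g, hfg, hadj⟩ := hG
  have disj : ∀ u v : V, u ≠ v → ¬ G.Adj u v → g u < f v ∨ g v < f u := by
    intro u v huv hn
    by_contra hcon
    push_neg at hcon
    obtain ⟨h1, h2⟩ := hcon
    exact hn ((hadj u v huv).2 ⟨max (f u) (f v),
      ⟨le_max_left _ _, max_le (hfg u) h1⟩, ⟨le_max_right _ _, max_le h2 (hfg v)⟩⟩)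
  have revAvoid : ∀ {c u w : V} (p : G.Walk u w), AvoidsClosedNbhd G c p →
      AvoidsClosedNbhd G c p.reverse := by
    intro c u w p hp q hq
    exact hp q (by simpa using hq)
  rcases disj x y hxy nxy with h1 | h1
  · rcases disj y z hyz nyz with h2 | h2
    · exact walk_side hfg hadj pxz hpxz h1 h2
    · rcases disj x z hxz nxz with h3 | h3
      · exact walk_side hfg hadj pxy hpxy h3 h2
      · exact walk_side hfg hadj pyz.reverse (revAvoid pyz hpyz) h3 h1
  · rcases disj y z hyz nyz with h2 | h2
    · rcases disj x z hxz nxz with h3 | h3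
      · exact walk_side hfg hadj pyz hpyz h1 h3
      · exact walk_side hfg hadj pxy.reverse (revAvoid pxy hpxy) h2 h3
    · exact walk_side hfg hadj pxz.reverse (revAvoid pxz hpxz) h2 h1
end

section
/- Every interval graph admits an umbrella-free vertex ordering: if a finite simple graph G admits an interval representation, then there is a linear order ≺ on the vertices of G (e.g., by nondecreasing right endpoints of the intervals) such that for all vertices v1 ≺ v2 ≺ v3, if v1 is adjacent to v3 in G, then v2 is adjacent to v3 in G. -/
open Set

theorem Set.Icc_inter_Icc_nonempty_of_right_le {α : Type*} [Preorder α]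
    {a₁ b₁ a₂ b₂ a₃ b₃ : α} (h₂ : a₂ ≤ b₂) (h₁₂ : b₁ ≤ b₂) (h₂₃ : b₂ ≤ b₃)
    (h : (Icc a₁ b₁ ∩ Icc a₃ b₃).Nonempty) : (Icc a₂ b₂ ∩ Icc a₃ b₃).Nonempty := by
  obtain ⟨x, ⟨-, hx₁⟩, hx₃, -⟩ := h
  exact ⟨b₂, ⟨h₂, le_rfl⟩, hx₃.trans (hx₁.trans h₁₂), h₂₃⟩

theorem interval_graph_umbrella_free_order_general {V : Type*} (G : SimpleGraph V)
    (hG : IsIntervalGraph G) :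
    ∃ r : V → V → Prop, IsStrictTotalOrder V r ∧
      ∀ v1 v2 v3 : V, r v1 v2 → r v2 v3 → G.Adj v1 v3 → G.Adj v2 v3 := by
  obtain ⟨a, b, hab, hadj⟩ := hG
  -- a linear order on `V` along which `b` is monotone
  obtain ⟨_, hb, -⟩ := monovary_iff_exists_monotone.1 (monovary_self b)
  refine ⟨(· < ·), inferInstance, fun v1 v2 v3 h12 h23 h13 => ?_⟩
  rw [hadj v1 v3 (G.ne_of_adj h13)] at h13
  rw [hadj v2 v3 h23.ne]
  exact Icc_inter_Icc_nonempty_of_right_le (hab v2) (hb h12.le) (hb h23.le) h13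

/-- Every interval graph admits an umbrella-free vertex ordering: there is a strict
linear order `≺` on the vertices such that whenever `v1 ≺ v2 ≺ v3` and `v1` is
adjacent to `v3`, also `v2` is adjacent to `v3`. -/
theorem interval_graph_umbrella_free_order {V : Type*} [Fintype V] (G : SimpleGraph V)
    (hG : IsIntervalGraph G) :
    ∃ r : V → V → Prop, IsStrictTotalOrder V r ∧
      ∀ v1 v2 v3 : V, r v1 v2 → r v2 v3 → G.Adj v1 v3 → G.Adj v2 v3 :=
  interval_graph_umbrella_free_order_general G hG
end

section
/- Supercritical connectivity of evolutionary interval graphs: let (r_n) be a sequence of positive reals with lim_{n→∞} n·r_n/log n > 1, and let J_{r_n} be the evolutionary interval graph on n vertices with parameter r_n. Then the probability that J_{r_n} is a connected graph tends to 1 as n → ∞. -/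
open MeasureTheory Filter

noncomputable section

/-- The uniform probability measure on `[0,1] ⊆ ℝ`. -/
def unif01 : Measure ℝ := volume.restrict (Set.Icc 0 1)

/-- Sample space for an evolutionary interval graph on `n` vertices:
the first component gives the midpoints `c_i` (uniform on `[0,1]`) and the second
component gives the rescaled lengths `s_i` (uniform on `[0,1]`, so that the interval
length `L_i = 2 r s_i` is uniform on `[0,2r]`), all independent. -/
abbrev EvolSpace (n : ℕ) := (Fin n → ℝ) × (Fin n → ℝ)

/-- The product measure making all `2n` coordinates independent uniform on `[0,1]`. -/
def evolMeasure (n : ℕ) : Measure (EvolSpace n) :=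
  (Measure.pi fun _ : Fin n => unif01).prod (Measure.pi fun _ : Fin n => unif01)

/-- The interval of vertex `i`: midpoint `ω.1 i`, length `2 * r * ω.2 i`
(uniform on `[0, 2r]` when `ω.2 i` is uniform on `[0,1]`). -/
def evolInterval (n : ℕ) (r : ℝ) (ω : EvolSpace n) (i : Fin n) : Set ℝ :=
  Set.Icc (ω.1 i - r * ω.2 i) (ω.1 i + r * ω.2 i)

/-- The evolutionary interval graph `J_r` determined by a sample `ω`: distinct
vertices are adjacent iff their intervals intersect. -/
def evolGraph (n : ℕ) (r : ℝ) (ω : EvolSpace n) : SimpleGraph (Fin n) where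
  Adj i j := i ≠ j ∧ (evolInterval n r ω i ∩ evolInterval n r ω j).Nonempty
  symm := by
    constructor
    intro i j h
    exact ⟨Ne.symm h.1, by rw [Set.inter_comm]; exact h.2⟩
  loopless := by
    constructor
    intro i h
    exact h.1 rfl

/-- The probability that the evolutionary interval graph `J_r` on `n` vertices
is connected. -/
def connProb (n : ℕ) (r : ℝ) : ENNReal :=
  evolMeasure n {ω | (evolGraph n r ω).Connected}

/-!
Cut `[0, 1]` into `N ≈ m / r` cells of length `δ = r / m`. If each cell lies inside a single
vertex interval, consecutive covering intervals overlap, and every interval contains its midpoint,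
which lies in some cell; so the graph is connected. Integrating over the rescaled length `s` the
length of the admissible midpoints, a fixed vertex covers a cell `[a, a + δ]` with `r ≤ a + δ` and
`a + r ≤ 1` with probability `≥ r - δ`, and any cell with probability `≥ r / 2 - δ`. All but at
most `2m` cells are of the first kind, so the union bound over cells bounds the failure
probability by `n e^{-n r (1 - 1/m)} + 2m e^{-n r (1/2 - 1/m)}`, which tends to `0` once
`n r ≥ A log n` with `A (1 - 1/m) > 1`.
-/

open Set Real Topology

instance : IsProbabilityMeasure unif01 :=
  ⟨by simp [unif01]⟩

instance (n : ℕ) : IsProbabilityMeasure (evolMeasure n) := by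
  unfold evolMeasure; infer_instance

lemma ofReal_integral_le_lintegral_ofReal {α : Type*} [MeasurableSpace α] {μ : Measure α}
    {f : α → ℝ} (hf : Integrable f μ) :
    ENNReal.ofReal (∫ x, f x ∂μ) ≤ ∫⁻ x, ENNReal.ofReal (f x) ∂μ := by
  rw [integral_eq_lintegral_pos_part_sub_lintegral_neg_part hf]
  exact (ENNReal.ofReal_le_ofReal (sub_le_self _ ENNReal.toReal_nonneg)).trans
    ENNReal.ofReal_toReal_le

lemma unif01_Icc (x y : ℝ) : unif01 (Icc x y) = ENNReal.ofReal (min y 1 - max x 0) := by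
  rw [unif01, Measure.restrict_apply measurableSet_Icc, Icc_inter_Icc, Real.volume_Icc]

lemma ae_evolMeasure_mem_Icc (n : ℕ) :
    ∀ᵐ ω ∂evolMeasure n, ∀ i, ω.1 i ∈ Icc (0 : ℝ) 1 ∧ ω.2 i ∈ Icc (0 : ℝ) 1 := by
  have hpi : ∀ᵐ f ∂Measure.pi (fun _ : Fin n => unif01), ∀ i, f i ∈ Icc (0 : ℝ) 1 :=
    ae_all_iff.2 fun i => Measure.tendsto_eval_ae_ae (ae_restrict_mem measurableSet_Icc)
  filter_upwards [Measure.quasiMeasurePreserving_fst.ae hpi,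
    Measure.quasiMeasurePreserving_snd.ae hpi] with ω h₁ h₂ i
  exact ⟨h₁ i, h₂ i⟩

lemma evolMeasure_forall_mem (n : ℕ) (S : Set (ℝ × ℝ)) :
    evolMeasure n {ω | ∀ i, (ω.1 i, ω.2 i) ∈ S} = (unif01.prod unif01 S) ^ n := by
  have hmp := measurePreserving_arrowProdEquivProdArrow ℝ ℝ (Fin n)
    (fun _ => unif01) (fun _ => unif01)
  have hpre : MeasurableEquiv.arrowProdEquivProdArrow ℝ ℝ (Fin n) ⁻¹'
      {ω | ∀ i, (ω.1 i, ω.2 i) ∈ S} = univ.pi fun _ => S := by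
    ext f
    simp [MeasurableEquiv.arrowProdEquivProdArrow, Equiv.arrowProdEquivProdArrow]
  rw [evolMeasure, ← hmp.map_eq, MeasurableEquiv.map_apply, hpre, Measure.pi_pi]
  simp

lemma evolMeasure_forall_notMem_le (n : ℕ) {S : Set (ℝ × ℝ)} (hS : MeasurableSet S)
    {q : ℝ} (hq : 0 ≤ q) (hqS : ENNReal.ofReal q ≤ unif01.prod unif01 S) :
    evolMeasure n {ω | ∀ i, (ω.1 i, ω.2 i) ∉ S} ≤ ENNReal.ofReal (exp (-(n * q))) := by
  have hcompl : unif01.prod unif01 Sᶜ ≤ ENNReal.ofReal (exp (-q)) :=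
    calc unif01.prod unif01 Sᶜ = 1 - unif01.prod unif01 S := prob_compl_eq_one_sub hS
      _ ≤ 1 - ENNReal.ofReal q := tsub_le_tsub_left hqS 1
      _ = ENNReal.ofReal (1 - q) := by rw [ENNReal.ofReal_sub _ hq, ENNReal.ofReal_one]
      _ ≤ ENNReal.ofReal (exp (-q)) := ENNReal.ofReal_le_ofReal (by linarith [add_one_le_exp (-q)])
  calc evolMeasure n {ω | ∀ i, (ω.1 i, ω.2 i) ∈ Sᶜ} = (unif01.prod unif01 Sᶜ) ^ n :=
        evolMeasure_forall_mem n Sᶜ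
    _ ≤ ENNReal.ofReal (exp (-q)) ^ n := pow_le_pow_left' hcompl n
    _ = ENNReal.ofReal (exp (-(n * q))) := by
        rw [← ENNReal.ofReal_pow (exp_pos _).le, ← exp_nat_mul, mul_neg]

/-- `(c, s)` lies in `coverSet r a δ` iff the interval of a vertex with midpoint `c` and rescaled
length `s` contains `[a, a + δ]`. -/
def coverSet (r a δ : ℝ) : Set (ℝ × ℝ) :=
  {p | p.1 - r * p.2 ≤ a ∧ a + δ ≤ p.1 + r * p.2}

lemma measurableSet_coverSet (r a δ : ℝ) : MeasurableSet (coverSet r a δ) :=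
  (measurableSet_le (f := fun p : ℝ × ℝ => p.1 - r * p.2) (by fun_prop) (by fun_prop)).inter
    (measurableSet_le (g := fun p : ℝ × ℝ => p.1 + r * p.2) (by fun_prop) (by fun_prop))

lemma unif01_prod_coverSet (r a δ : ℝ) :
    unif01.prod unif01 (coverSet r a δ)
      = ∫⁻ s, ENNReal.ofReal (min (a + r * s) 1 - max (a + δ - r * s) 0) ∂unif01 := by
  rw [Measure.prod_apply_symm (measurableSet_coverSet r a δ)]
  refine lintegral_congr fun s => ?_
  rw [← unif01_Icc]
  congr 1
  ext c
  simp only [coverSet, mem_preimage, mem_ofPred_eq, mem_Icc]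
  constructor <;> rintro ⟨h₁, h₂⟩ <;> constructor <;> linarith

lemma ofReal_intervalIntegral_le_unif01_prod_coverSet {r a δ : ℝ} {f : ℝ → ℝ}
    (hf : IntervalIntegrable f volume 0 1)
    (hle : ∀ s ∈ Icc (0 : ℝ) 1, f s ≤ min (a + r * s) 1 - max (a + δ - r * s) 0) :
    ENNReal.ofReal (∫ s in (0 : ℝ)..1, f s) ≤ unif01.prod unif01 (coverSet r a δ) := by
  have hint : ∫ s in (0 : ℝ)..1, f s = ∫ s, f s ∂unif01 := by
    rw [intervalIntegral.integral_of_le zero_le_one, unif01, integral_Icc_eq_integral_Ioc]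
  rw [hint, unif01_prod_coverSet]
  refine (ofReal_integral_le_lintegral_ofReal ?_).trans ?_
  · exact (intervalIntegrable_iff_integrableOn_Icc_of_le zero_le_one).1 hf
  · exact setLIntegral_mono' measurableSet_Icc fun s hs => ENNReal.ofReal_le_ofReal (hle s hs)

lemma ofReal_sub_le_unif01_prod_coverSet {r a δ : ℝ} (hr : 0 ≤ r) (h₀ : r ≤ a + δ)
    (h₁ : a + r ≤ 1) : ENNReal.ofReal (r - δ) ≤ unif01.prod unif01 (coverSet r a δ) := by
  have hint : ∫ s in (0 : ℝ)..1, (2 * r * s - δ) = r - δ := by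
    rw [intervalIntegral.integral_sub (by apply Continuous.intervalIntegrable; fun_prop)
      (by simp), intervalIntegral.integral_const_mul]
    norm_num
    ring
  rw [← hint]
  refine ofReal_intervalIntegral_le_unif01_prod_coverSet
    (by apply Continuous.intervalIntegrable; fun_prop) fun s ⟨_, hs₁⟩ => ?_
  have : r * s ≤ r := mul_le_of_le_one_right hr hs₁
  rw [min_eq_left (by linarith)]
  rcases max_cases (a + δ - r * s) 0 with ⟨h, _⟩ | ⟨h, _⟩ <;> rw [h] <;> linarith

lemma ofReal_half_sub_le_unif01_prod_coverSet {r a δ : ℝ} (hr : 0 ≤ r) (hr₁ : r ≤ 1)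
    (hδ : 0 ≤ δ) (ha₀ : 0 ≤ a) (ha₁ : a ≤ 1) :
    ENNReal.ofReal (r / 2 - δ) ≤ unif01.prod unif01 (coverSet r a δ) := by
  have hint : ∫ s in (0 : ℝ)..1, (r * s - δ) = r / 2 - δ := by
    rw [intervalIntegral.integral_sub (by apply Continuous.intervalIntegrable; fun_prop)
      (by simp), intervalIntegral.integral_const_mul]
    norm_num
    ring
  rw [← hint]
  refine ofReal_intervalIntegral_le_unif01_prod_coverSet
    (by apply Continuous.intervalIntegrable; fun_prop) fun s ⟨hs₀, hs₁⟩ => ?_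
  have : r * s ≤ r := mul_le_of_le_one_right hr hs₁
  have : 0 ≤ r * s := mul_nonneg hr hs₀
  rcases min_cases (a + r * s) 1 with ⟨h, _⟩ | ⟨h, _⟩ <;>
    rcases max_cases (a + δ - r * s) 0 with ⟨h', _⟩ | ⟨h', _⟩ <;> rw [h, h'] <;> linarith

lemma exists_mem_Icc_mul_of_mem_Icc {δ x : ℝ} {N : ℕ} (hN : 0 < N)
    (hx : x ∈ Icc 0 (N * δ)) : ∃ k < N, x ∈ Icc (k * δ) ((k + 1) * δ) := by
  induction N with
  | zero => exact absurd hN (lt_irrefl 0)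
  | succ N ih =>
    rcases Nat.eq_zero_or_pos N with rfl | hN'
    · exact ⟨0, Nat.one_pos, by simpa using hx⟩
    by_cases hxN : x ≤ N * δ
    · obtain ⟨k, hk, hxk⟩ := ih hN' ⟨hx.1, hxN⟩
      exact ⟨k, Nat.lt_succ_of_lt hk, hxk⟩
    · exact ⟨N, Nat.lt_succ_self N, (not_le.1 hxN).le, by exact_mod_cast hx.2⟩

lemma evolGraph_reachable_of_mem {n : ℕ} {r : ℝ} {ω : EvolSpace n} {i j : Fin n} {x : ℝ}
    (hi : x ∈ evolInterval n r ω i) (hj : x ∈ evolInterval n r ω j) :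
    (evolGraph n r ω).Reachable i j := by
  by_cases hij : i = j
  · exact hij ▸ SimpleGraph.Reachable.refl i
  · exact SimpleGraph.Adj.reachable ⟨hij, x, hi, hj⟩

lemma evolGraph_connected_of_cover {n N : ℕ} {r δ : ℝ} {ω : EvolSpace n} (hδ : 0 ≤ δ)
    (hN : 0 < N) (hcov : ∀ k < N, ∃ i, Icc (k * δ) ((k + 1) * δ) ⊆ evolInterval n r ω i)
    (hmeet : ∀ i, ∃ x ∈ Icc 0 (N * δ), x ∈ evolInterval n r ω i) :
    (evolGraph n r ω).Connected := by
  choose f hf using hcov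
  have hchain : ∀ k (hk : k < N), (evolGraph n r ω).Reachable (f 0 hN) (f k hk) := by
    intro k
    induction k with
    | zero => exact fun _ => SimpleGraph.Reachable.refl _
    | succ k ih =>
      intro hk
      have hk' : k < N := Nat.lt_of_succ_lt hk
      refine (ih hk').trans (evolGraph_reachable_of_mem (x := (k + 1) * δ) ?_ ?_)
      · exact hf k hk' ⟨by linarith, le_rfl⟩
      · exact hf (k + 1) hk ⟨by push_cast; rfl, by push_cast; linarith⟩
  have hroot : ∀ i, (evolGraph n r ω).Reachable i (f 0 hN) := by
    intro i
    obtain ⟨x, hx, hxi⟩ := hmeet i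
    obtain ⟨k, hk, hxk⟩ := exists_mem_Icc_mul_of_mem_Icc hN hx
    exact (evolGraph_reachable_of_mem hxi (hf k hk hxk)).trans (hchain k hk).symm
  have : Nonempty (Fin n) := ⟨f 0 hN⟩
  exact ⟨fun i j => (hroot i).trans (hroot j).symm⟩

lemma evolMeasure_not_connected_le_sum {n N : ℕ} {r δ : ℝ} (hr : 0 ≤ r) (hδ : 0 ≤ δ)
    (hN : 1 ≤ N * δ) :
    evolMeasure n {ω | ¬(evolGraph n r ω).Connected}
      ≤ ∑ k ∈ Finset.range N, evolMeasure n {ω | ∀ i, (ω.1 i, ω.2 i) ∉ coverSet r (k * δ) δ} := by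
  have hN0 : 0 < N := Nat.pos_of_ne_zero fun h => by simp [h] at hN; linarith
  refine (measure_mono_ae ?_).trans (measure_biUnion_finset_le _ _)
  filter_upwards [ae_evolMeasure_mem_Icc n] with ω hω (hdisc : ¬(evolGraph n r ω).Connected)
  refine mem_iUnion₂.2 ?_
  by_contra! hcov
  refine hdisc (evolGraph_connected_of_cover hδ hN0 (fun k hk => ?_) fun i => ?_)
  · obtain ⟨i, hc, hs⟩ : ∃ i, (ω.1 i, ω.2 i) ∈ coverSet r (k * δ) δ := by
      simpa using hcov k (Finset.mem_range.2 hk)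
    exact ⟨i, Icc_subset_Icc hc (by linarith)⟩
  · have hrs : 0 ≤ r * ω.2 i := mul_nonneg hr (hω i).2.1
    exact ⟨ω.1 i, ⟨(hω i).1.1, (hω i).1.2.trans hN⟩, by linarith, by linarith⟩

lemma card_filter_near_ends_le (m N : ℕ) :
    (Finset.filter (fun k => ¬(m ≤ k + 1 ∧ k + m + 1 ≤ N)) (Finset.range N)).card ≤ 2 * m := by
  calc (Finset.filter (fun k => ¬(m ≤ k + 1 ∧ k + m + 1 ≤ N)) (Finset.range N)).card
      ≤ (Finset.range m ∪ Finset.Ico (N - m) N).card := by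
        refine Finset.card_le_card fun k hk => ?_
        simp only [Finset.mem_filter, Finset.mem_range] at hk
        simp only [Finset.mem_union, Finset.mem_range, Finset.mem_Ico]
        omega
    _ ≤ (Finset.range m).card + (Finset.Ico (N - m) N).card := Finset.card_union_le _ _
    _ ≤ 2 * m := by simp only [Finset.card_range, Nat.card_Ico]; omega

lemma one_le_ceil_inv_mul {δ : ℝ} (hδ : 0 < δ) : 1 ≤ ⌈δ⁻¹⌉₊ * δ :=
  calc (1 : ℝ) = δ⁻¹ * δ := (inv_mul_cancel₀ hδ.ne').symm
    _ ≤ ⌈δ⁻¹⌉₊ * δ := by gcongr; exact Nat.le_ceil _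

lemma ceil_inv_mul_lt {δ : ℝ} (hδ : 0 < δ) : ⌈δ⁻¹⌉₊ * δ < 1 + δ :=
  calc (⌈δ⁻¹⌉₊ : ℝ) * δ < (δ⁻¹ + 1) * δ := by gcongr; exact Nat.ceil_lt_add_one (by positivity)
    _ = 1 + δ := by rw [add_mul, inv_mul_cancel₀ hδ.ne', one_mul]

theorem evolMeasure_not_connected_le {n m : ℕ} {r : ℝ} (hm : 2 ≤ m) (hr : 0 < r) (hr₁ : r ≤ 1)
    (hmn : m ≤ n * r) :
    evolMeasure n {ω | ¬(evolGraph n r ω).Connected}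
      ≤ ENNReal.ofReal
          (n * exp (-(n * r * (1 - 1 / m))) + 2 * m * exp (-(n * r * (1 / 2 - 1 / m)))) := by
  set δ := r / m with hδ_def
  set N := ⌈δ⁻¹⌉₊
  have hm₂ : (2 : ℝ) ≤ m := by exact_mod_cast hm
  have hδ : 0 < δ := by positivity
  have hmδ : m * δ = r := by rw [hδ_def]; field_simp
  have hNδ : N * δ < 1 + δ := ceil_inv_mul_lt hδ
  have hNn : N ≤ n := Nat.ceil_le.2 (by rw [hδ_def, inv_div, div_le_iff₀ hr]; exact hmn)
  -- the cells `[kδ, (k + 1)δ]` with `r ≤ (k + 1)δ` and `kδ + r < 1`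
  let P k := m ≤ k + 1 ∧ k + m + 1 ≤ N
  have hinterior : ∀ k ∈ Finset.filter P (Finset.range N),
      evolMeasure n {ω | ∀ i, (ω.1 i, ω.2 i) ∉ coverSet r (k * δ) δ}
        ≤ ENNReal.ofReal (exp (-(n * (r - δ)))) := by
    intro k hk
    have hmk : (m : ℝ) ≤ k + 1 := by exact_mod_cast (Finset.mem_filter.1 hk).2.1
    have hkN : (k : ℝ) + m + 1 ≤ N := by exact_mod_cast (Finset.mem_filter.1 hk).2.2
    exact evolMeasure_forall_notMem_le n (measurableSet_coverSet _ _ _) (by nlinarith)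
      (ofReal_sub_le_unif01_prod_coverSet hr.le (by nlinarith) (by nlinarith))
  have hboundary : ∀ k ∈ Finset.filter (fun k => ¬P k) (Finset.range N),
      evolMeasure n {ω | ∀ i, (ω.1 i, ω.2 i) ∉ coverSet r (k * δ) δ}
        ≤ ENNReal.ofReal (exp (-(n * (r / 2 - δ)))) := by
    intro k hk
    have hkN : (k : ℝ) + 1 ≤ N := by exact_mod_cast Finset.mem_range.1 (Finset.mem_filter.1 hk).1
    exact evolMeasure_forall_notMem_le n (measurableSet_coverSet _ _ _) (by nlinarith)
      (ofReal_half_sub_le_unif01_prod_coverSet hr.le hr₁ hδ.le (by positivity) (by nlinarith))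
  calc evolMeasure n {ω | ¬(evolGraph n r ω).Connected}
      ≤ ∑ k ∈ Finset.range N, evolMeasure n {ω | ∀ i, (ω.1 i, ω.2 i) ∉ coverSet r (k * δ) δ} :=
        evolMeasure_not_connected_le_sum hr.le hδ.le (one_le_ceil_inv_mul hδ)
    _ = ∑ k ∈ Finset.filter P (Finset.range N), _
          + ∑ k ∈ Finset.filter (fun k => ¬P k) (Finset.range N), _ :=
        (Finset.sum_filter_add_sum_filter_not _ _ _).symm
    _ ≤ n • ENNReal.ofReal (exp (-(n * (r - δ))))
          + (2 * m) • ENNReal.ofReal (exp (-(n * (r / 2 - δ)))) := by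
        gcongr
        · exact (Finset.sum_le_card_nsmul _ _ _ hinterior).trans (nsmul_le_nsmul_left zero_le
            ((Finset.card_filter_le _ _).trans (by simpa using hNn)))
        · exact (Finset.sum_le_card_nsmul _ _ _ hboundary).trans (nsmul_le_nsmul_left zero_le
            (card_filter_near_ends_le m N))
    _ = _ := by
        rw [← ENNReal.ofReal_nsmul, ← ENNReal.ofReal_nsmul,
          ← ENNReal.ofReal_add (by positivity) (by positivity)]
        congr 1
        simp only [hδ_def, nsmul_eq_mul, Nat.cast_mul, Nat.cast_ofNat]
        ring_nf

lemma tendsto_natCast_log_atTop : Tendsto (fun n : ℕ => log n) atTop atTop :=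
  tendsto_log_atTop.comp tendsto_natCast_atTop_atTop

lemma tendsto_exp_neg_of_mul_log_le {u : ℕ → ℝ} {c : ℝ} (hc : 0 < c)
    (hu : ∀ᶠ n : ℕ in atTop, c * log n ≤ u n) : Tendsto (fun n => exp (-u n)) atTop (𝓝 0) :=
  tendsto_exp_neg_atTop_nhds_zero.comp
    (tendsto_atTop_mono' atTop hu (tendsto_natCast_log_atTop.const_mul_atTop hc))

lemma tendsto_mul_exp_neg_of_mul_log_le {u : ℕ → ℝ} {c : ℝ} (hc : 1 < c)
    (hu : ∀ᶠ n : ℕ in atTop, c * log n ≤ u n) :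
    Tendsto (fun n : ℕ => n * exp (-u n)) atTop (𝓝 0) := by
  have h := tendsto_exp_neg_of_mul_log_le (u := fun n => u n - log n) (sub_pos.2 hc)
    (hu.mono fun n hn => by linarith)
  refine h.congr' ((eventually_gt_atTop 0).mono fun n hn => ?_)
  rw [neg_sub, exp_sub, exp_log (by exact_mod_cast hn), div_eq_mul_inv, ← exp_neg]

lemma eventually_mul_log_le_of_tendsto {r : ℕ → ℝ} {A L : ℝ}
    (hlim : Tendsto (fun n : ℕ => (n : ℝ) * r n / log n) atTop (𝓝 L)) (hAL : A < L) :
    ∀ᶠ n : ℕ in atTop, A * log n ≤ n * r n := by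
  filter_upwards [hlim.eventually (eventually_ge_nhds hAL), eventually_gt_atTop 1] with n hn hn₁
  rwa [le_div_iff₀ (log_pos (by exact_mod_cast hn₁))] at hn

lemma tendsto_zero_of_tendsto_mul_div_log {r : ℕ → ℝ} {L : ℝ}
    (hlim : Tendsto (fun n : ℕ => (n : ℝ) * r n / log n) atTop (𝓝 L)) :
    Tendsto r atTop (𝓝 0) := by
  have hlog : Tendsto (fun n : ℕ => log n / n) atTop (𝓝 0) :=
    isLittleO_log_id_atTop.tendsto_div_nhds_zero.comp tendsto_natCast_atTop_atTop
  refine (mul_zero L ▸ hlim.mul hlog).congr' ((eventually_gt_atTop 1).mono fun n hn => ?_)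
  have : log n ≠ 0 := (log_pos (by exact_mod_cast hn)).ne'
  have : (n : ℝ) ≠ 0 := by positivity
  field_simp

lemma tendsto_connProb_of_not_connected_le {r B : ℕ → ℝ} (hB : Tendsto B atTop (𝓝 0))
    (h : ∀ᶠ n in atTop,
      evolMeasure n {ω | ¬(evolGraph n (r n) ω).Connected} ≤ ENNReal.ofReal (B n)) :
    Tendsto (fun n => connProb n (r n)) atTop (𝓝 1) := by
  have hlower : Tendsto (fun n => 1 - ENNReal.ofReal (B n)) atTop (𝓝 1) := by
    simpa only [ENNReal.ofReal_zero, tsub_zero] using ENNReal.Tendsto.sub tendsto_const_nhds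
      (ENNReal.tendsto_ofReal hB) (Or.inl ENNReal.one_ne_top)
  refine tendsto_of_tendsto_of_tendsto_of_le_of_le' hlower tendsto_const_nhds ?_
    (Eventually.of_forall fun n => prob_le_one)
  filter_upwards [h] with n hn
  rw [tsub_le_iff_right]
  calc 1 = evolMeasure n univ := measure_univ.symm
    _ ≤ connProb n (r n) + evolMeasure n {ω | ¬(evolGraph n (r n) ω).Connected} :=
        measure_univ_le_add_compl _
    _ ≤ connProb n (r n) + ENNReal.ofReal (B n) := by gcongr

/-- Supercritical connectivity of evolutionary interval graphs:
if `n * r n / log n` converges to a limit `L > 1`, then `J_{r n}` is connected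
with probability tending to `1`. -/
theorem evolGraph_connected_supercritical (r : ℕ → ℝ) (hr : ∀ n, 0 < r n)
    (L : ℝ) (hL : 1 < L)
    (hlim : Tendsto (fun n : ℕ => (n : ℝ) * r n / Real.log n) atTop (nhds L)) :
    Tendsto (fun n : ℕ => connProb n (r n)) atTop (nhds 1) := by
  obtain ⟨A, hA, hAL⟩ := exists_between hL
  obtain ⟨m, hm, hmA⟩ : ∃ m : ℕ, 3 ≤ m ∧ 1 < A * (1 - 1 / m) :=
    ((eventually_ge_atTop 3).and (((tendsto_one_div_atTop_nhds_zero_nat.const_sub 1).const_mul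
      A).eventually (eventually_gt_nhds (by simpa using hA)))).exists
  have hm₂ : (1 : ℝ) / m < 1 / 2 := by gcongr; exact_mod_cast hm
  have hAn := eventually_mul_log_le_of_tendsto hlim hAL
  have hAn' : ∀ c, 0 ≤ c → ∀ᶠ n : ℕ in atTop, A * c * log n ≤ n * r n * c := fun c hc =>
    hAn.mono fun n hn => (mul_right_comm A c _).trans_le (mul_le_mul_of_nonneg_right hn hc)
  refine tendsto_connProb_of_not_connected_le (B := fun n : ℕ =>
    n * exp (-(n * r n * (1 - 1 / m))) + 2 * m * exp (-(n * r n * (1 / 2 - 1 / m)))) ?_ ?_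
  · have h₁ := tendsto_mul_exp_neg_of_mul_log_le hmA (hAn' _ (by linarith))
    have h₂ := tendsto_exp_neg_of_mul_log_le (mul_pos (one_pos.trans hA) (sub_pos.2 hm₂))
      (hAn' _ (sub_pos.2 hm₂).le)
    simpa using h₁.add (h₂.const_mul (2 * m : ℝ))
  · filter_upwards [(tendsto_zero_of_tendsto_mul_div_log hlim).eventually
      (eventually_le_nhds one_pos), hAn, tendsto_natCast_log_atTop.eventually_ge_atTop (m / A)]
      with n hr₁ hAn hlog
    refine evolMeasure_not_connected_le (by omega) (hr n) hr₁ ?_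
    calc (m : ℝ) = A * (m / A) := by field_simp [(one_pos.trans hA).ne']
      _ ≤ A * log n := by gcongr
      _ ≤ n * r n := hAn

end
end

section
/- Maximum-degree upper bound on boxicity: let G be a finite simple graph with maximum degree Δ. Then the boxicity of G is at most Δ² + 2. -/
/-- The boxicity of a simple graph `G`: the least `m` such that `G` is the
edge-intersection of `m` interval graphs on the same vertex set.  The empty
intersection (`m = 0`) is the complete graph `⊤`, so complete graphs have
boxicity `0`. -/
noncomputable def boxicity {V : Type*} (G : SimpleGraph V) : ℕ :=
  sInf {m : ℕ | ∃ I : Fin m → SimpleGraph V,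
    (∀ k, IsIntervalGraph (I k)) ∧ G = ⨅ k, I k}

/-!
Colour `V` with `k = ⌊(Δ² + 3Δ)/4⌋ + 1` classes by minimising a potential that charges `4` for
each monochromatic edge and `1` for each monochromatic pair with a common neighbour: at a
minimum no vertex can improve by switching class, so the colouring is proper and every vertex
has at most three partners of the second kind in its class. Minimising again splits every class
into two sides with at most one partner per side. Hence the neighbours of a vertex in one side
of one class are at most two, and can be given consecutive ranks. For each class and each of
the two orders of the ranks, one interval graph puts the class as points, one side left and
the other right of `0`, and every other vertex on the interval from `0` out to its neighbours
in the class. These `2k ≤ Δ² + 2` interval graphs contain `G`, and each non-edge of `G` is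
missing from one of them. When `Δ = 1`, `G` is itself an interval graph.
-/

open Finset

def intervalGraph {V : Type*} (lo hi : V → ℤ) : SimpleGraph V where
  Adj u v := u ≠ v ∧ lo u ≤ hi v ∧ lo v ≤ hi u
  symm := ⟨fun _ _ h => ⟨h.1.symm, h.2.2, h.2.1⟩⟩
  loopless := ⟨fun _ h => h.1 rfl⟩

theorem isIntervalGraph_intervalGraph {V : Type*} {lo hi : V → ℤ} (h : ∀ v, lo v ≤ hi v) :
    IsIntervalGraph (intervalGraph lo hi) := by
  refine ⟨fun v => lo v, fun v => hi v, fun v => Int.cast_le.mpr (h v), fun u v huv => ?_⟩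
  rw [Set.Icc_inter_Icc, Set.nonempty_Icc, sup_le_iff, le_inf_iff, le_inf_iff]
  simp only [intervalGraph, Int.cast_le, h]
  tauto

theorem boxicity_le_card {V κ : Type*} [Fintype κ] {G : SimpleGraph V} (I : κ → SimpleGraph V)
    (hI : ∀ k, IsIntervalGraph (I k)) (hle : ∀ k, G ≤ I k)
    (hsep : ∀ u v, u ≠ v → ¬G.Adj u v → ∃ k, ¬(I k).Adj u v) :
    boxicity G ≤ Fintype.card κ := by
  have hG : G = ⨅ k, I k := by
    refine le_antisymm (le_iInf hle) fun u v huv => ?_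
    rw [SimpleGraph.iInf_adj] at huv
    by_contra hG
    obtain ⟨k, hk⟩ := hsep u v huv.2 hG
    exact hk (huv.1 k)
  refine Nat.sInf_le ⟨I ∘ (Fintype.equivFin κ).symm, fun _ => hI _, ?_⟩
  rw [hG]
  exact ((Fintype.equivFin κ).symm.iInf_comp (g := I)).symm

section LocalSearch

variable {V ι : Type*} [Fintype V] [DecidableEq V] [DecidableEq ι]
  (g : V → V → ℕ)

def labelPotential (c : V → ι) : ℕ := ∑ u, ∑ w, if c u = c w then g u w else 0

def classWeight (c : V → ι) (v : V) (i : ι) : ℕ := ∑ w ∈ univ.erase v with c w = i, g v w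

variable {g}

theorem labelPotential_eq (hg : ∀ u w, g u w = g w u) (c : V → ι) (v : V) :
    labelPotential g c = g v v + 2 * classWeight g c v (c v) +
      ∑ u ∈ univ.erase v, ∑ w ∈ univ.erase v, if c u = c w then g u w else 0 := by
  have hsplit (u : V) : ∑ w, (if c u = c w then g u w else 0) =
      (if c u = c v then g u v else 0) + ∑ w ∈ univ.erase v, if c u = c w then g u w else 0 :=
    (add_sum_erase _ _ (mem_univ v)).symm
  have hrow : ∑ w ∈ univ.erase v, (if c v = c w then g v w else 0) =
      classWeight g c v (c v) := by
    simp only [classWeight, sum_filter, eq_comm]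
  have hcol : ∑ u ∈ univ.erase v, (if c u = c v then g u v else 0) =
      classWeight g c v (c v) := by
    simp only [classWeight, sum_filter, hg _ v]
  rw [labelPotential, ← add_sum_erase _ _ (mem_univ v), hsplit v,
    sum_congr rfl fun u _ => hsplit u, sum_add_distrib, hrow, hcol, if_pos rfl]
  ring

theorem labelPotential_update_add (hg : ∀ u w, g u w = g w u) (c : V → ι) (v : V) (j : ι) :
    labelPotential g (Function.update c v j) + 2 * classWeight g c v (c v) =
      labelPotential g c + 2 * classWeight g c v j := by
  have hweight : classWeight g (Function.update c v j) v j = classWeight g c v j := by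
    refine sum_congr ?_ fun _ _ => rfl
    ext w
    simp +contextual [Function.update_of_ne]
  have hrest : (∑ u ∈ univ.erase v, ∑ w ∈ univ.erase v,
        if Function.update c v j u = Function.update c v j w then g u w else 0) =
      ∑ u ∈ univ.erase v, ∑ w ∈ univ.erase v, if c u = c w then g u w else 0 := by
    refine sum_congr rfl fun u hu => sum_congr rfl fun w hw => ?_
    rw [Function.update_of_ne (ne_of_mem_erase hu), Function.update_of_ne (ne_of_mem_erase hw)]
  rw [labelPotential_eq hg _ v, labelPotential_eq hg c v, Function.update_self, hweight, hrest]
  ring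

theorem exists_card_mul_classWeight_le [Fintype ι] [Nonempty ι] (hg : ∀ u w, g u w = g w u) :
    ∃ c : V → ι, ∀ v,
      Fintype.card ι * classWeight g c v (c v) ≤ ∑ w ∈ univ.erase v, g v w := by
  obtain ⟨c, -, hmin⟩ :=
    exists_min_image univ (labelPotential g) (univ_nonempty (α := V → ι))
  refine ⟨c, fun v => ?_⟩
  have hle (j : ι) : classWeight g c v (c v) ≤ classWeight g c v j := by
    have := hmin (Function.update c v j) (mem_univ _)
    have := labelPotential_update_add hg c v j
    omega
  calc Fintype.card ι * classWeight g c v (c v) = ∑ _j : ι, classWeight g c v (c v) := by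
        simp
    _ ≤ ∑ j, classWeight g c v j := sum_le_sum fun j _ => hle j
    _ = ∑ w ∈ univ.erase v, g v w := sum_fiberwise _ _ _

end LocalSearch

namespace SimpleGraph

variable {V : Type*} (G : SimpleGraph V)

def HasCommonNeighbor (u v : V) : Prop := u ≠ v ∧ ∃ x, G.Adj x u ∧ G.Adj x v

variable {G}

theorem HasCommonNeighbor.symm {u v : V} (h : G.HasCommonNeighbor u v) :
    G.HasCommonNeighbor v u :=
  ⟨h.1.symm, h.2.imp fun _ hx => ⟨hx.2, hx.1⟩⟩

theorem hasCommonNeighbor_comm {u v : V} : G.HasCommonNeighbor u v ↔ G.HasCommonNeighbor v u :=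
  ⟨HasCommonNeighbor.symm, HasCommonNeighbor.symm⟩

variable [Fintype V]

section

variable [DecidableRel G.Adj]

theorem card_le_of_forall_hasCommonNeighbor [DecidableEq V] {v : V} {S : Finset V}
    (hS : ∀ w ∈ S, G.HasCommonNeighbor v w) : #S ≤ G.maxDegree * (G.maxDegree - 1) := by
  have hsub : S ⊆ (G.neighborFinset v).biUnion fun x => (G.neighborFinset x).erase v := by
    intro w hw
    obtain ⟨hvw, x, hxv, hxw⟩ := hS w hw
    exact mem_biUnion.2 ⟨x, by simpa using hxv.symm, by simpa using ⟨hvw.symm, hxw⟩⟩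
  calc #S ≤ ∑ x ∈ G.neighborFinset v, #((G.neighborFinset x).erase v) :=
        (card_le_card hsub).trans card_biUnion_le
    _ ≤ ∑ _x ∈ G.neighborFinset v, (G.maxDegree - 1) := by
        refine sum_le_sum fun x hx => ?_
        rw [card_erase_of_mem (by simpa [adj_comm] using hx)]
        exact Nat.sub_le_sub_right (G.degree_le_maxDegree x) 1
    _ ≤ G.maxDegree * (G.maxDegree - 1) := by
        rw [sum_const, smul_eq_mul]
        exact Nat.mul_le_mul_right _ (G.degree_le_maxDegree v)

theorem exists_coloring_card_le_three (k : ℕ)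
    (hk : G.maxDegree ^ 2 + 3 * G.maxDegree < 4 * k) :
    ∃ c : V → Fin k, (∀ u v, G.Adj u v → c u ≠ c v) ∧
      ∀ v (S : Finset V), (∀ w ∈ S, c w = c v ∧ G.HasCommonNeighbor v w) → #S ≤ 3 := by
  classical
  have : Nonempty (Fin k) := ⟨⟨0, by omega⟩⟩
  obtain ⟨c, hc⟩ := exists_card_mul_classWeight_le (ι := Fin k)
    (g := fun u w => 4 * (if G.Adj u w then 1 else 0) + if G.HasCommonNeighbor u w then 1 else 0)
    (fun u w => by simp only [adj_comm, hasCommonNeighbor_comm])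
  have hclass (v : V) : 4 * #{w ∈ univ.erase v | c w = c v ∧ G.Adj v w} +
      #{w ∈ univ.erase v | c w = c v ∧ G.HasCommonNeighbor v w} ≤ 3 := by
    have hweight := hc v
    simp only [classWeight, Fintype.card_fin, sum_add_distrib, ← mul_sum, sum_boole,
      filter_filter, Nat.cast_id] at hweight
    have hadj : #{w ∈ univ.erase v | G.Adj v w} ≤ G.maxDegree :=
      (card_le_card fun w => by simp).trans (G.degree_le_maxDegree v)
    have hcommon := G.card_le_of_forall_hasCommonNeighbor
      (S := {w ∈ univ.erase v | G.HasCommonNeighbor v w}) fun w hw => (mem_filter.1 hw).2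
    have hsq : G.maxDegree * (G.maxDegree - 1) + G.maxDegree = G.maxDegree ^ 2 := by
      rw [Nat.mul_sub_one, sq, Nat.sub_add_cancel (Nat.le_mul_self _)]
    refine Nat.le_of_lt_succ (Nat.lt_of_mul_lt_mul_left (a := k) ?_)
    omega
  refine ⟨c, fun u v huv hcuv => ?_, fun v S hS => ?_⟩
  · have := hclass u
    have : 0 < #{w ∈ univ.erase u | c w = c u ∧ G.Adj u w} :=
      card_pos.2 ⟨v, by simpa [hcuv, huv.ne'] using huv⟩
    omega
  · have hsub : S ⊆ {w ∈ univ.erase v | c w = c v ∧ G.HasCommonNeighbor v w} := fun w hw =>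
      mem_filter.2 ⟨mem_erase.2 ⟨(hS w hw).2.1.symm, mem_univ w⟩, hS w hw⟩
    have := hclass v
    have := card_le_card hsub
    omega

end

theorem exists_sides_unique {ι : Type*} [DecidableEq ι] (c : V → ι)
    (hc : ∀ v (S : Finset V), (∀ w ∈ S, c w = c v ∧ G.HasCommonNeighbor v w) → #S ≤ 3) :
    ∃ s : V → Bool, ∀ v w w', (c v = c w ∧ s v = s w ∧ G.HasCommonNeighbor v w) →
      (c v = c w' ∧ s v = s w' ∧ G.HasCommonNeighbor v w') → w = w' := by
  classical
  obtain ⟨s, hs⟩ := exists_card_mul_classWeight_le (ι := Bool)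
    (g := fun u w => if c w = c u ∧ G.HasCommonNeighbor u w then 1 else 0)
    (fun u w => by simp only [eq_comm (a := c w), hasCommonNeighbor_comm])
  refine ⟨s, fun v w w' hw hw' => ?_⟩
  have hside := hs v
  simp only [classWeight, Fintype.card_bool, sum_boole, filter_filter, Nat.cast_id] at hside
  set S : Finset V := {w ∈ univ.erase v | s w = s v ∧ c w = c v ∧ G.HasCommonNeighbor v w}
  have hone : #S ≤ 1 := by
    have := hc v {w ∈ univ.erase v | c w = c v ∧ G.HasCommonNeighbor v w} fun w hw =>
      (mem_filter.1 hw).2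
    omega
  have hmem {x : V} (hx : c v = c x ∧ s v = s x ∧ G.HasCommonNeighbor v x) : x ∈ S :=
    mem_filter.2 ⟨mem_erase.2 ⟨hx.2.2.1.symm, mem_univ x⟩, hx.2.1.symm, hx.1.symm, hx.2.2⟩
  exact card_le_one.1 hone w (hmem hw) w' (hmem hw')

end SimpleGraph

section Partner

variable {V : Type*} {R : V → V → Prop}

open Classical in
noncomputable def partner (R : V → V → Prop) (v : V) : V :=
  if h : ∃ w, R v w then h.choose else v

theorem partner_eq_of_rel (huniq : ∀ v w w', R v w → R v w' → w = w') {v w : V} (h : R v w) :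
    partner R v = w := by
  have hex : ∃ w, R v w := ⟨w, h⟩
  rw [partner, dif_pos hex]
  exact huniq _ _ _ hex.choose_spec h

theorem rel_partner_of_ne {v : V} (h : partner R v ≠ v) : R v (partner R v) := by
  by_cases hex : ∃ w, R v w
  · rw [partner, dif_pos hex]
    exact hex.choose_spec
  · rw [partner, dif_neg hex] at h
    exact absurd rfl h

theorem partner_involutive (hsymm : ∀ v w, R v w → R w v)
    (huniq : ∀ v w w', R v w → R v w' → w = w') : Function.Involutive (partner R) := by
  intro v
  by_cases hex : ∃ w, R v w
  · obtain ⟨w, hw⟩ := hex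
    rw [partner_eq_of_rel huniq hw, partner_eq_of_rel huniq (hsymm _ _ hw)]
  · have hv : partner R v = v := by rw [partner, dif_neg hex]
    rw [hv, hv]

end Partner

section Involution

variable {V : Type*} {p : V → V}

theorem eq_or_eq_of_min_eq_min (hp : Function.Involutive p) {e : V → ℕ}
    (he : Function.Injective e) {v w : V} (h : min (e v) (e (p v)) = min (e w) (e (p w))) :
    w = v ∨ w = p v := by
  rcases min_choice (e v) (e (p v)) with hv | hv <;>
    rcases min_choice (e w) (e (p w)) with hw | hw <;> rw [hv, hw] at h <;> have h := he h
  · exact .inl h.symm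
  · exact .inr (by rw [h, hp])
  · exact .inr h.symm
  · exact .inl (hp.injective h).symm

-- Rank the pairs `{v, p v}` by their smaller index, the two members of a pair consecutively.
theorem exists_injective_le_add_one_of_involutive [Fintype V] (hp : Function.Involutive p) :
    ∃ ρ : V → ℕ, Function.Injective ρ ∧ (∀ v, ρ v < 2 * Fintype.card V) ∧
      ∀ v, ρ (p v) ≤ ρ v + 1 := by
  set e : V → ℕ := fun v => Fintype.equivFin V v
  have he : Function.Injective e := Fin.val_injective.comp (Fintype.equivFin V).injective
  refine ⟨fun v => 2 * min (e v) (e (p v)) + if e v ≤ e (p v) then 0 else 1, fun v w h => ?_,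
    fun v => ?_, fun v => ?_⟩
  · dsimp only at h
    have hmin : min (e v) (e (p v)) = min (e w) (e (p w)) := by split_ifs at h <;> omega
    rcases eq_or_eq_of_min_eq_min hp he hmin with rfl | rfl
    · rfl
    · rw [hp] at h
      have : e v = e (p v) := by split_ifs at h <;> omega
      exact he this
  · have : e v < Fintype.card V := (Fintype.equivFin V v).isLt
    dsimp only
    split_ifs <;> omega
  · simp only [hp v, min_comm (e (p v))]
    split_ifs <;> omega

end Involution

namespace SimpleGraph

variable {V : Type*} [Fintype V] (G : SimpleGraph V) [DecidableRel G.Adj]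

theorem isIntervalGraph_of_maxDegree_le_one (hG : G.maxDegree ≤ 1) : IsIntervalGraph G := by
  have huniq : ∀ v w w', G.Adj v w → G.Adj v w' → w = w' := fun v w w' hw hw' =>
    card_le_one.1 ((G.degree_le_maxDegree v).trans hG) w (by simpa) w' (by simpa)
  have hp := partner_involutive (fun _ _ h => h.symm) huniq
  obtain ⟨e, he⟩ := Countable.exists_injective_nat V
  set m : V → ℤ := fun v => (min (e v) (e (partner G.Adj v)) : ℕ)
  suffices G = intervalGraph m m from this ▸ isIntervalGraph_intervalGraph fun _ => le_rfl
  ext u w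
  simp only [intervalGraph, ← le_antisymm_iff]
  constructor
  · intro huw
    refine ⟨huw.ne, ?_⟩
    simp only [m, ← partner_eq_of_rel huniq huw, hp u, min_comm]
  · rintro ⟨huw, hm⟩
    rcases eq_or_eq_of_min_eq_min hp he (Nat.cast_injective hm) with rfl | rfl
    · exact absurd rfl huw
    · exact rel_partner_of_ne (Ne.symm huw)

theorem boxicity_le_one_of_maxDegree_le_one (hG : G.maxDegree ≤ 1) : boxicity G ≤ 1 :=
  boxicity_le_card (κ := Unit) (fun _ => G) (fun _ => G.isIntervalGraph_of_maxDegree_le_one hG)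
    (fun _ => le_rfl) fun _ _ _ h => ⟨(), h⟩

end SimpleGraph

namespace SimpleGraph

variable {V ι : Type*} [Fintype V] [DecidableEq ι] (G : SimpleGraph V) [DecidableRel G.Adj]
  (c : V → ι) (s : V → Bool) (h : V → ℕ) (i : ι)

def signedHeight (v : V) : ℤ := if s v then h v else -h v

def sideReach (b : Bool) (x : V) : ℕ := {a ∈ G.neighborFinset x | c a = i ∧ s a = b}.sup h

def reachIcc (x : V) : Set ℤ :=
  Set.Icc (-(G.sideReach c s h i false x : ℤ)) (G.sideReach c s h i true x)

def classGraph : SimpleGraph V :=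
  intervalGraph (fun x => if c x = i then signedHeight s h x else -G.sideReach c s h i false x)
    (fun x => if c x = i then signedHeight s h x else G.sideReach c s h i true x)

theorem isIntervalGraph_classGraph : IsIntervalGraph (G.classGraph c s h i) :=
  isIntervalGraph_intervalGraph fun x => by split_ifs <;> omega

variable {G c s h i}

theorem classGraph_adj_iff {u x : V} (hu : c u = i) (hx : c x ≠ i) :
    (G.classGraph c s h i).Adj u x ↔
      signedHeight s h u ∈ G.reachIcc c s h i x := by
  have hne : u ≠ x := fun h => hx (h ▸ hu)
  simp only [classGraph, intervalGraph, reachIcc, hu, hx, if_true, if_false, Set.mem_Icc]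
  tauto

theorem signedHeight_mem_reachIcc_of_adj {x a : V} (hxa : G.Adj x a) (ha : c a = i) :
    signedHeight s h a ∈ G.reachIcc c s h i x := by
  have hle (b : Bool) (hb : s a = b) : h a ≤ G.sideReach c s h i b x :=
    le_sup (f := h) (by simpa [ha, hb] using hxa)
  rw [signedHeight, reachIcc, Set.mem_Icc]
  cases hsa : s a
  · have := hle false hsa
    simp only [Bool.false_eq_true, if_false]
    omega
  · have := hle true hsa
    simp only [if_true]
    omega

theorem le_sideReach_of_signedHeight_mem_reachIcc {u x : V}
    (hmem : signedHeight s h u ∈ G.reachIcc c s h i x) :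
    h u ≤ G.sideReach c s h i (s u) x := by
  rw [signedHeight, reachIcc, Set.mem_Icc] at hmem
  cases hsu : s u <;> simp only [hsu, Bool.false_eq_true, if_false, if_true] at hmem <;> omega

theorem le_classGraph (hc : ∀ u v, G.Adj u v → c u ≠ c v) : G ≤ G.classGraph c s h i := by
  have key {u v : V} (huv : G.Adj u v) (hu : c u = i) : (G.classGraph c s h i).Adj u v :=
    (classGraph_adj_iff hu fun hv => hc u v huv (hu.trans hv.symm)).2
      (signedHeight_mem_reachIcc_of_adj huv.symm hu)
  intro u v huv
  by_cases hu : c u = i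
  · exact key huv hu
  by_cases hv : c v = i
  · exact (key huv.symm hv).symm
  simp only [classGraph, intervalGraph, hu, hv, if_false]
  exact ⟨huv.ne, by omega, by omega⟩

theorem classGraph_not_adj_of_eq (hpos : ∀ v, 0 < h v) (hinj : Function.Injective h) {u v : V}
    (huv : u ≠ v) (hu : c u = i) (hv : c v = i) : ¬(G.classGraph c s h i).Adj u v := by
  rintro ⟨-, h₁, h₂⟩
  simp only [hu, hv, if_true] at h₁ h₂
  have := hpos u
  have := hpos v
  have : h u = h v := by
    unfold signedHeight at h₁ h₂
    split_ifs at h₁ h₂ <;> omega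
  exact huv (hinj this)

theorem classGraph_not_adj_of_lt {u v : V} (hu : c u = i) (hv : c v ≠ i) (hpos : 0 < h u)
    (hlt : ∀ a, G.Adj v a → c a = i → s a = s u → h a < h u) :
    ¬(G.classGraph c s h i).Adj u v := by
  intro hadj
  have hle := le_sideReach_of_signedHeight_mem_reachIcc ((classGraph_adj_iff hu hv).1 hadj)
  have hlt' : G.sideReach c s h i (s u) v < h u :=
    (Finset.sup_lt_iff hpos).2 fun a ha => by
      simp only [mem_filter, mem_neighborFinset] at ha
      exact hlt a ha.1 ha.2.1 ha.2.2
  omega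

end SimpleGraph

theorem forall_lt_or_forall_lt_of_le_add_one {α : Type*} {T : Set α} {f : α → ℕ} {t : ℕ}
    (hT : ∀ a ∈ T, ∀ b ∈ T, f b ≤ f a + 1) (ht : ∀ a ∈ T, f a ≠ t) :
    (∀ a ∈ T, t < f a) ∨ ∀ a ∈ T, f a < t := by
  by_contra! ⟨⟨a, ha, hat⟩, b, hb, hbt⟩
  have := hT a ha b hb
  have := ht a ha
  have := ht b hb
  omega

namespace SimpleGraph

variable {V ι : Type*} [Fintype V] {G : SimpleGraph V}

theorem exists_rank_of_sides_unique (c : V → ι) (s : V → Bool)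
    (huniq : ∀ v w w', (c v = c w ∧ s v = s w ∧ G.HasCommonNeighbor v w) →
      (c v = c w' ∧ s v = s w' ∧ G.HasCommonNeighbor v w') → w = w') :
    ∃ ρ : V → ℕ, Function.Injective ρ ∧ (∀ v, ρ v < 2 * Fintype.card V) ∧
      ∀ x a b, G.Adj x a → G.Adj x b → c a = c b → s a = s b → ρ b ≤ ρ a + 1 := by
  obtain ⟨ρ, hinj, hbound, hstep⟩ := exists_injective_le_add_one_of_involutive
    (partner_involutive (fun _ _ h => ⟨h.1.symm, h.2.1.symm, h.2.2.symm⟩) huniq)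
  refine ⟨ρ, hinj, hbound, fun x a b ha hb hcab hsab => ?_⟩
  rcases eq_or_ne a b with rfl | hab
  · omega
  · rw [← partner_eq_of_rel huniq ⟨hcab, hsab, hab, x, ha, hb⟩]
    exact hstep a

variable [Fintype ι] [DecidableEq ι] [DecidableRel G.Adj]

theorem boxicity_le_two_mul_card (c : V → ι) (s : V → Bool)
    (hc : ∀ u v, G.Adj u v → c u ≠ c v)
    (huniq : ∀ v w w', (c v = c w ∧ s v = s w ∧ G.HasCommonNeighbor v w) →
      (c v = c w' ∧ s v = s w' ∧ G.HasCommonNeighbor v w') → w = w') :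
    boxicity G ≤ 2 * Fintype.card ι := by
  obtain ⟨ρ, hinj, hbound, hclose⟩ := exists_rank_of_sides_unique c s huniq
  set height : Bool → V → ℕ := fun d v => if d then 2 * Fintype.card V - ρ v else ρ v + 1
  have hpos (d : Bool) (v : V) : 0 < height d v := by
    have := hbound v
    cases d <;> simp only [height, if_true, Bool.false_eq_true, if_false] <;> omega
  have hinj' (d : Bool) : Function.Injective (height d) := fun v w h => hinj <| by
    have := hbound v
    have := hbound w
    cases d <;> simp only [height, if_true, Bool.false_eq_true, if_false] at h <;> omega
  refine (boxicity_le_card (κ := ι × Bool) (fun j => G.classGraph c s (height j.2) j.1)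
    (fun _ => isIntervalGraph_classGraph ..) (fun _ => le_classGraph hc)
    fun u v huv hnadj => ?_).trans (by simp [mul_comm])
  by_cases hcv : c v = c u
  · exact ⟨(c u, false), classGraph_not_adj_of_eq (hpos false) (hinj' false) huv rfl hcv⟩
  -- The neighbours of `v` on `u`'s side of its class are at most a pair with consecutive ranks,
  -- so one of the two orders puts `u` above all of them.
  rcases forall_lt_or_forall_lt_of_le_add_one (T := {a | G.Adj v a ∧ c a = c u ∧ s a = s u})
    (f := ρ) (t := ρ u) (fun a ha b hb => hclose v a b ha.1 hb.1 (ha.2.1.trans hb.2.1.symm)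
      (ha.2.2.trans hb.2.2.symm)) (fun a ha h => hnadj (hinj h ▸ ha.1).symm) with hgt | hlt
  · refine ⟨(c u, true), classGraph_not_adj_of_lt rfl hcv (hpos _ _) fun a hva hca hsa => ?_⟩
    have := hgt a ⟨hva, hca, hsa⟩
    have := hbound a
    simp only [height, if_true]
    omega
  · refine ⟨(c u, false), classGraph_not_adj_of_lt rfl hcv (hpos _ _) fun a hva hca hsa => ?_⟩
    have := hlt a ⟨hva, hca, hsa⟩
    simp only [height, Bool.false_eq_true, if_false]
    omega

end SimpleGraph

/-- Maximum-degree upper bound on boxicity: `boxicity G ≤ Δ² + 2` where `Δ` is the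
maximum degree of `G`. -/
theorem boxicity_le_max_degree_sq {V : Type*} [Fintype V] (G : SimpleGraph V)
    [DecidableRel G.Adj] :
    boxicity G ≤ G.maxDegree ^ 2 + 2 := by
  set D := G.maxDegree
  rcases eq_or_ne D 1 with hD | hD
  · exact (G.boxicity_le_one_of_maxDegree_le_one hD.le).trans (by omega)
  obtain ⟨c, hc, hc3⟩ :=
    G.exists_coloring_card_le_three ((D ^ 2 + 3 * D) / 4 + 1) (by change D ^ 2 + 3 * D < _; omega)
  obtain ⟨s, huniq⟩ := G.exists_sides_unique c hc3
  calc boxicity G ≤ 2 * Fintype.card (Fin ((D ^ 2 + 3 * D) / 4 + 1)) :=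
        G.boxicity_le_two_mul_card c s hc huniq
    _ ≤ D ^ 2 + 2 := by
        rw [Fintype.card_fin]
        rcases le_or_gt D 2 with hD2 | hD3
        · interval_cases D <;> omega
        · have : 3 * D ≤ D ^ 2 := by nlinarith
          omega
end

section
/- Logarithmic upper bound on boxicity: let G be a finite simple graph on n ≥ 2 vertices with maximum degree Δ. Then the boxicity of G is at most ⌈(Δ + 2)·ln n⌉. -/
/-!
For a linear order `σ` of the vertices, give `x` the interval from `σ x` to the largest
position in its closed neighbourhood `N[x]`. This interval graph contains `G`, and it misses a
non-edge `uv` as soon as all of `N[u]` precedes `v` (or all of `N[v]` precedes `u`). For a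
uniformly random `σ` the first event means that `v` is last in `N[u] ∪ {v}`, which has
probability `1 / (deg u + 2)`; the two events are disjoint, so `uv` survives with probability
at most `Δ / (Δ + 2) ≤ exp (-2 / (Δ + 2))`. For `m ≥ (Δ + 2) ln n` independent orders a fixed
non-edge survives all of them with probability at most `n⁻²`, and a union bound over the fewer
than `n²` non-edges gives orders whose interval graphs intersect to `G`.
-/

open Finset

theorem Real.div_add_two_pow_le_inv_sq {d x : ℝ} {m : ℕ} (hd : 0 ≤ d) (hx : 0 < x)
    (hm : (d + 2) * Real.log x ≤ m) : (d / (d + 2)) ^ m ≤ (x ^ 2)⁻¹ := by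
  have hd2 : 0 < d + 2 := by linarith
  have hq : d / (d + 2) ≤ Real.exp (-(2 / (d + 2))) := by
    have h := Real.add_one_le_exp (-(2 / (d + 2)))
    rwa [show -(2 / (d + 2)) + 1 = d / (d + 2) by field_simp; ring] at h
  calc (d / (d + 2)) ^ m ≤ Real.exp (-(2 / (d + 2))) ^ m :=
        pow_le_pow_left₀ (by positivity) hq m
    _ = Real.exp (-(2 * m / (d + 2))) := by rw [← Real.exp_nat_mul]; ring_nf
    _ ≤ Real.exp (-(2 * Real.log x)) := by
        rw [Real.exp_le_exp, neg_le_neg_iff, le_div_iff₀ hd2]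
        linarith
    _ = (x ^ 2)⁻¹ := by
        rw [Real.exp_neg, ← Real.exp_log (pow_pos hx 2), Real.log_pow]; norm_num

theorem Fintype.exists_forall_exists_notMem_of_sum_card_pow_lt {ι Ω : Type*} [Fintype Ω]
    (P : Finset ι) (B : ι → Finset Ω) {m : ℕ}
    (h : ∑ p ∈ P, #(B p) ^ m < Fintype.card Ω ^ m) :
    ∃ f : Fin m → Ω, ∀ p ∈ P, ∃ k, f k ∉ B p := by
  classical
  by_contra! hall
  have hcover : (univ : Finset (Fin m → Ω)) ⊆
      P.biUnion fun p ↦ Fintype.piFinset fun _ ↦ B p := fun f _ ↦ by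
    obtain ⟨p, hp, hf⟩ := hall f
    exact mem_biUnion.2 ⟨p, hp, Fintype.mem_piFinset.2 hf⟩
  refine h.not_ge ?_
  calc Fintype.card Ω ^ m = #(univ : Finset (Fin m → Ω)) := by simp
    _ ≤ ∑ p ∈ P, #(Fintype.piFinset fun _ : Fin m ↦ B p) :=
        (card_le_card hcover).trans card_biUnion_le
    _ = ∑ p ∈ P, #(B p) ^ m := by simp only [Fintype.card_piFinset_const]

section Orderings

variable {α β : Type*} [Fintype α] [DecidableEq α] [Fintype β] [LinearOrder β]

theorem card_filter_forall_le_eq {T : Finset α} {v w : α} (hv : v ∈ T) (hw : w ∈ T) :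
    #{σ : α ≃ β | ∀ x ∈ T, σ x ≤ σ v} = #{σ : α ≃ β | ∀ x ∈ T, σ x ≤ σ w} := by
  have hswap : ∀ x ∈ T, Equiv.swap v w x ∈ T := fun x hx ↦ by
    rcases eq_or_ne x v with rfl | hxv
    · simpa using hw
    rcases eq_or_ne x w with rfl | hxw
    · simpa using hv
    · rwa [Equiv.swap_apply_of_ne_of_ne hxv hxw]
  refine card_nbij' (fun σ ↦ (Equiv.swap v w).trans σ) (fun σ ↦ (Equiv.swap v w).trans σ)
    ?_ ?_ ?_ ?_
  · simp only [coe_filter, mem_univ, true_and]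
    intro σ hσ x hx
    simpa using hσ _ (hswap x hx)
  · simp only [coe_filter, mem_univ, true_and]
    intro σ hσ x hx
    simpa using hσ _ (hswap x hx)
  all_goals intro σ _; ext x; simp

theorem card_filter_forall_le_mul_card {T : Finset α} {v : α} (hv : v ∈ T) :
    #{σ : α ≃ β | ∀ x ∈ T, σ x ≤ σ v} * #T = Fintype.card (α ≃ β) := by
  set A : α → Finset (α ≃ β) := fun w ↦ {σ | ∀ x ∈ T, σ x ≤ σ w}
  have hcover : (univ : Finset (α ≃ β)) = T.biUnion A := by
    refine (eq_univ_of_forall fun σ ↦ ?_).symm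
    obtain ⟨w, hw, hmax⟩ := T.exists_max_image σ ⟨v, hv⟩
    exact mem_biUnion.2 ⟨w, hw, by simpa [A] using hmax⟩
  have hdisj : (T : Set α).PairwiseDisjoint A := fun w hw w' hw' hne ↦ by
    refine disjoint_left.2 fun σ h h' ↦ hne (σ.injective (le_antisymm ?_ ?_))
    · simp only [A, mem_filter, mem_univ, true_and] at h'; exact h' w hw
    · simp only [A, mem_filter, mem_univ, true_and] at h; exact h w' hw'
  calc #(A v) * #T = ∑ w ∈ T, #(A w) := by
        rw [sum_congr rfl fun w hw ↦ (card_filter_forall_le_eq hv hw).symm, sum_const,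
          smul_eq_mul, mul_comm]
    _ = Fintype.card (α ≃ β) := by rw [← card_biUnion hdisj, ← hcover, card_univ]

end Orderings

namespace SimpleGraph

section Intervals

variable {V : Type*}

def intervalGraph (a b : V → ℝ) : SimpleGraph V where
  Adj x y := x ≠ y ∧ (Set.Icc (a x) (b x) ∩ Set.Icc (a y) (b y)).Nonempty
  symm := ⟨fun _ _ h ↦ ⟨h.1.symm, by rw [Set.inter_comm]; exact h.2⟩⟩
  loopless := ⟨fun _ h ↦ h.1 rfl⟩

variable {a b : V → ℝ}

theorem isIntervalGraph_intervalGraph (h : ∀ v, a v ≤ b v) :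
    IsIntervalGraph (intervalGraph a b) :=
  ⟨a, b, h, fun _ _ huv ↦ show _ ∧ _ ↔ _ from and_iff_right huv⟩

theorem intervalGraph_adj_iff (h : ∀ v, a v ≤ b v) {x y : V} :
    (intervalGraph a b).Adj x y ↔ x ≠ y ∧ a x ≤ b y ∧ a y ≤ b x := by
  simp only [intervalGraph, Set.Icc_inter_Icc, Set.nonempty_Icc, sup_le_iff, le_inf_iff]
  have := h x
  have := h y
  tauto

end Intervals

variable {V : Type*} [Fintype V] (G : SimpleGraph V) [DecidableRel G.Adj] [DecidableEq V]

def closedNeighborFinset (u : V) : Finset V := insert u (G.neighborFinset u)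

variable {G}

theorem mem_closedNeighborFinset {u w : V} :
    w ∈ G.closedNeighborFinset u ↔ w = u ∨ G.Adj u w := by
  simp [closedNeighborFinset]

theorem self_mem_closedNeighborFinset (u : V) : u ∈ G.closedNeighborFinset u :=
  mem_insert_self _ _

theorem card_closedNeighborFinset (u : V) : #(G.closedNeighborFinset u) = G.degree u + 1 := by
  rw [closedNeighborFinset, card_insert_of_notMem (G.notMem_neighborFinset_self u),
    card_neighborFinset_eq_degree]

variable (G)

def ClosedNbhdPrecedes {β : Type*} [LT β] (f : V → β) (u v : V) : Prop :=
  ∀ w ∈ G.closedNeighborFinset u, f w < f v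

instance {β : Type*} [LT β] [DecidableLT β] (f : V → β) (u v : V) :
    Decidable (G.ClosedNbhdPrecedes f u v) :=
  inferInstanceAs (Decidable (∀ w ∈ _, _))

variable {G}

theorem ClosedNbhdPrecedes.comp_strictMono {β γ : Type*} [Preorder β] [Preorder γ]
    {f : V → β} {g : β → γ} {u v : V} (h : G.ClosedNbhdPrecedes f u v) (hg : StrictMono g) :
    G.ClosedNbhdPrecedes (g ∘ f) u v :=
  fun w hw ↦ hg (h w hw)

variable (G)

def closedNbhdIntervalGraph (f : V → ℝ) : SimpleGraph V :=
  intervalGraph f fun x ↦ (G.closedNeighborFinset x).sup' ⟨x, self_mem_closedNeighborFinset x⟩ f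

variable {G}

theorem closedNbhdIntervalGraph_adj_iff {f : V → ℝ} {x y : V} :
    (G.closedNbhdIntervalGraph f).Adj x y ↔ x ≠ y ∧
      f x ≤ (G.closedNeighborFinset y).sup' ⟨y, self_mem_closedNeighborFinset y⟩ f ∧
      f y ≤ (G.closedNeighborFinset x).sup' ⟨x, self_mem_closedNeighborFinset x⟩ f :=
  intervalGraph_adj_iff fun x ↦ le_sup' f (self_mem_closedNeighborFinset x)

theorem isIntervalGraph_closedNbhdIntervalGraph (f : V → ℝ) :
    IsIntervalGraph (G.closedNbhdIntervalGraph f) :=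
  isIntervalGraph_intervalGraph fun x ↦ le_sup' f (self_mem_closedNeighborFinset x)

theorem le_closedNbhdIntervalGraph (f : V → ℝ) : G ≤ G.closedNbhdIntervalGraph f := by
  intro x y hxy
  exact closedNbhdIntervalGraph_adj_iff.2 ⟨hxy.ne,
    le_sup' f (mem_closedNeighborFinset.2 (Or.inr hxy.symm)),
    le_sup' f (mem_closedNeighborFinset.2 (Or.inr hxy))⟩

theorem ClosedNbhdPrecedes.not_adj_closedNbhdIntervalGraph {f : V → ℝ} {u v : V}
    (h : G.ClosedNbhdPrecedes f u v) : ¬ (G.closedNbhdIntervalGraph f).Adj u v := by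
  rw [closedNbhdIntervalGraph_adj_iff]
  exact fun ⟨_, _, hvu⟩ ↦ hvu.not_gt ((sup'_lt_iff _).2 h)

theorem boxicity_le_of_forall_closedNbhdPrecedes {m : ℕ} (f : Fin m → V → ℝ)
    (hf : ∀ u v, u ≠ v → ¬ G.Adj u v →
      ∃ k, G.ClosedNbhdPrecedes (f k) u v ∨ G.ClosedNbhdPrecedes (f k) v u) :
    boxicity G ≤ m := by
  refine Nat.sInf_le ⟨fun k ↦ G.closedNbhdIntervalGraph (f k),
    fun k ↦ isIntervalGraph_closedNbhdIntervalGraph (f k), le_antisymm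
      (le_iInf fun k ↦ le_closedNbhdIntervalGraph (f k)) fun u v huv ↦ ?_⟩
  rw [iInf_adj] at huv
  by_contra hG
  obtain ⟨k, hk | hk⟩ := hf u v huv.2 hG
  · exact hk.not_adj_closedNbhdIntervalGraph (huv.1 k)
  · exact hk.not_adj_closedNbhdIntervalGraph (huv.1 k).symm

section Counting

variable {β : Type*} [Fintype β] [LinearOrder β] {u v : V}

theorem card_filter_closedNbhdPrecedes_mul (huv : u ≠ v) (hadj : ¬ G.Adj u v) :
    #{σ : V ≃ β | G.ClosedNbhdPrecedes σ u v} * (G.degree u + 2) = Fintype.card (V ≃ β) := by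
  have hv : v ∉ G.closedNeighborFinset u := by
    simp [mem_closedNeighborFinset, huv.symm, hadj]
  have hfilter : #{σ : V ≃ β | G.ClosedNbhdPrecedes σ u v} =
      #{σ : V ≃ β | ∀ x ∈ insert v (G.closedNeighborFinset u), σ x ≤ σ v} := by
    refine congrArg card (filter_congr fun σ _ ↦ ?_)
    simp only [forall_mem_insert, le_refl, true_and]
    exact ⟨fun h w hw ↦ (h w hw).le, fun h w hw ↦
      (h w hw).lt_of_ne (σ.injective.ne (ne_of_mem_of_not_mem hw hv))⟩
  rw [hfilter, ← card_filter_forall_le_mul_card (mem_insert_self v _), card_insert_of_notMem hv,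
    card_closedNeighborFinset]

theorem card_filter_not_closedNbhdPrecedes_mul_le (huv : u ≠ v) (hadj : ¬ G.Adj u v) :
    #{σ : V ≃ β | ¬ G.ClosedNbhdPrecedes σ u v ∧ ¬ G.ClosedNbhdPrecedes σ v u} *
      (G.maxDegree + 2) ≤ Fintype.card (V ≃ β) * G.maxDegree := by
  have hexcl : ∀ σ : V ≃ β, G.ClosedNbhdPrecedes σ u v → ¬ G.ClosedNbhdPrecedes σ v u :=
    fun σ h h' ↦ (h u (self_mem_closedNeighborFinset u)).asymm
      (h' v (self_mem_closedNeighborFinset v))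
  have hsplit : #{σ : V ≃ β | G.ClosedNbhdPrecedes σ u v} +
      #{σ : V ≃ β | G.ClosedNbhdPrecedes σ v u} +
      #{σ : V ≃ β | ¬ G.ClosedNbhdPrecedes σ u v ∧ ¬ G.ClosedNbhdPrecedes σ v u} =
        Fintype.card (V ≃ β) := by
    rw [← card_union_of_disjoint (disjoint_filter.2 fun σ _ ↦ hexcl σ), ← filter_or, ← card_univ,
      ← card_filter_add_card_filter_not (s := univ) fun σ : V ≃ β ↦
        G.ClosedNbhdPrecedes σ u v ∨ G.ClosedNbhdPrecedes σ v u]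
    simp only [not_or]
  have hlow : ∀ w z : V, w ≠ z → ¬ G.Adj w z →
      Fintype.card (V ≃ β) ≤ #{σ : V ≃ β | G.ClosedNbhdPrecedes σ w z} * (G.maxDegree + 2) :=
    fun w z hwz hwz' ↦ (card_filter_closedNbhdPrecedes_mul (β := β) hwz hwz').symm.trans_le
      (Nat.mul_le_mul_left _ (Nat.add_le_add_right (G.degree_le_maxDegree w) 2))
  nlinarith [hlow u v huv hadj, hlow v u huv.symm fun h ↦ hadj h.symm]

end Counting

theorem exists_equivFin_forall_closedNbhdPrecedes {m : ℕ}
    (hm : ((G.maxDegree : ℝ) + 2) * Real.log (Fintype.card V) ≤ m) :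
    ∃ σ : Fin m → V ≃ Fin (Fintype.card V), ∀ u v, u ≠ v → ¬ G.Adj u v →
      ∃ k, G.ClosedNbhdPrecedes (σ k) u v ∨ G.ClosedNbhdPrecedes (σ k) v u := by
  rcases isEmpty_or_nonempty V with hV | hV
  · exact ⟨fun _ ↦ Fintype.equivFin V, fun u ↦ isEmptyElim u⟩
  set n := Fintype.card V
  set N := Fintype.card (V ≃ Fin n)
  set Δ := G.maxDegree
  let P : Finset (V × V) := {p | p.1 ≠ p.2 ∧ ¬ G.Adj p.1 p.2}
  let B : V × V → Finset (V ≃ Fin n) := fun p ↦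
    {σ | ¬ G.ClosedNbhdPrecedes σ p.1 p.2 ∧ ¬ G.ClosedNbhdPrecedes σ p.2 p.1}
  suffices hsum : ∑ p ∈ P, #(B p) ^ m < N ^ m by
    obtain ⟨σ, hσ⟩ := Fintype.exists_forall_exists_notMem_of_sum_card_pow_lt P B hsum
    refine ⟨σ, fun u v huv hadj ↦ ?_⟩
    obtain ⟨k, hk⟩ := hσ (u, v) (by simp [P, huv, hadj])
    exact ⟨k, by simpa [B, or_iff_not_imp_left] using hk⟩
  have hn : (0 : ℝ) < n := by exact_mod_cast Fintype.card_pos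
  have hN : (0 : ℝ) < N := by exact_mod_cast Fintype.card_pos_iff.2 ⟨Fintype.equivFin V⟩
  have hB : ∀ p ∈ P, (#(B p) : ℝ) ^ m ≤ (N : ℝ) ^ m * ((n : ℝ) ^ 2)⁻¹ := by
    intro p hp
    simp only [P, mem_filter, mem_univ, true_and] at hp
    have hcard : (#(B p) : ℝ) ≤ N * (Δ / (Δ + 2)) := by
      rw [mul_div_assoc', le_div_iff₀ (by positivity)]
      exact_mod_cast card_filter_not_closedNbhdPrecedes_mul_le hp.1 hp.2
    calc (#(B p) : ℝ) ^ m ≤ (N * (Δ / (Δ + 2))) ^ m := pow_le_pow_left₀ (by positivity) hcard m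
      _ ≤ (N : ℝ) ^ m * ((n : ℝ) ^ 2)⁻¹ := by
        rw [mul_pow]
        exact mul_le_mul_of_nonneg_left
          (Real.div_add_two_pow_le_inv_sq (Nat.cast_nonneg _) hn hm) (by positivity)
  have hP : #P < n ^ 2 := by
    have hdiag : (hV.some, hV.some) ∉ P := by simp [P]
    simpa [sq] using card_lt_univ_of_notMem hdiag
  have hsumR : ∑ p ∈ P, (#(B p) : ℝ) ^ m < (N : ℝ) ^ m :=
    calc ∑ p ∈ P, (#(B p) : ℝ) ^ m ≤ #P * ((N : ℝ) ^ m * ((n : ℝ) ^ 2)⁻¹) := by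
          simpa using sum_le_card_nsmul P _ _ hB
      _ < (n : ℝ) ^ 2 * ((N : ℝ) ^ m * ((n : ℝ) ^ 2)⁻¹) := by gcongr; exact_mod_cast hP
      _ = (N : ℝ) ^ m := by field_simp
  exact_mod_cast hsumR

end SimpleGraph

theorem boxicity_le_log_bound_general {V : Type*} [Fintype V] (G : SimpleGraph V)
    [DecidableRel G.Adj] :
    boxicity G ≤ ⌈((G.maxDegree : ℝ) + 2) * Real.log (Fintype.card V)⌉₊ := by
  classical
  obtain ⟨σ, hσ⟩ := G.exists_equivFin_forall_closedNbhdPrecedes (Nat.le_ceil _)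
  have hcast : StrictMono ((Nat.cast : ℕ → ℝ) ∘ (Fin.val : Fin (Fintype.card V) → ℕ)) :=
    Nat.strictMono_cast.comp Fin.val_strictMono
  refine G.boxicity_le_of_forall_closedNbhdPrecedes (fun k ↦ (Nat.cast ∘ Fin.val) ∘ σ k)
    fun u v huv hadj ↦ ?_
  obtain ⟨k, hk⟩ := hσ u v huv hadj
  exact ⟨k, hk.imp (·.comp_strictMono hcast) (·.comp_strictMono hcast)⟩

/-- Logarithmic upper bound on boxicity: for a graph on `n ≥ 2` vertices with maximum
degree `Δ`, `boxicity G ≤ ⌈(Δ + 2) ln n⌉`. -/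
theorem boxicity_le_log_bound {V : Type*} [Fintype V] (G : SimpleGraph V)
    [DecidableRel G.Adj] (hn : 2 ≤ Fintype.card V) :
    boxicity G ≤ ⌈((G.maxDegree : ℝ) + 2) * Real.log (Fintype.card V)⌉₊ :=
  boxicity_le_log_bound_general G
end
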